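/- arXiv:2602.23633 — 2 statements merged into one kernel-verified Lean document; each statement's English description precedes it below -/
import Mathlib

section
/- Let g : ℝ^m × ℝ^n → ℝ be continuously differentiable, μ-strongly convex in y for each x, with ∇g being L-Lipschitz jointly in (x,y). Let y*(x) denote the unique minimizer of g(x, ·). Then y* is (L/μ)-Lipschitz: ‖y*(x) - y*(x')‖ ≤ (L/μ)‖x - x'‖ for all x, x'. -/
open scoped RealInnerProductSpace

/-! Strong convexity of `g x` makes `gy x` strongly monotone (the gradient of the convex function
`g x - μ/2 ‖·‖²` is monotone), so `μ ‖y - y'‖ ≤ ‖gy x y - gy x y'‖`. For `y = y*(x)` and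
`y' = y*(x')` the right side is `‖gy x' y' - gy x y'‖ ≤ L ‖x - x'‖`, since both `gy x y` and
`gy x' y'` vanish. -/

section Gradient

variable {F : Type*} [NormedAddCommGroup F] [InnerProductSpace ℝ F] [CompleteSpace F]
  {f : F → ℝ} {f' : F → F} {μ : ℝ}

lemma HasGradientAt.sub_const_mul_norm_sq {z : F} (hf : HasGradientAt f (f' z) z) (c : ℝ) :
    HasGradientAt (fun w => f w - c / 2 * ‖w‖ ^ 2) (f' z - c • z) z := by
  rw [hasGradientAt_iff_hasFDerivAt]
  refine (hf.hasFDerivAt.sub ((hasStrictFDerivAt_norm_sq z).hasFDerivAt.const_mul (c / 2)))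
    |>.congr_fderiv ?_
  ext w
  simp only [sub_apply, InnerProductSpace.toDual_apply_apply, smul_apply, coe_innerSL_apply,
    nsmul_eq_mul, Nat.cast_ofNat, smul_eq_mul, map_sub, map_smul, sub_right_inj]
  ring

-- Restrict `f` to the segment `[a, b]` and compare the one-sided slopes at its endpoints.
lemma ConvexOn.inner_gradient_le_inner_gradient (hc : ConvexOn ℝ Set.univ f)
    (hf : ∀ z, HasGradientAt f (f' z) z) (a b : F) :
    ⟪f' a, b - a⟫ ≤ ⟪f' b, b - a⟫ := by
  let φ : ℝ → ℝ := f ∘ AffineMap.lineMap a b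
  have hφ : ConvexOn ℝ Set.univ φ := by
    simpa using hc.comp_affineMap (AffineMap.lineMap a b)
  have hderiv (t : ℝ) : HasDerivAt φ ⟪f' (AffineMap.lineMap a b t), b - a⟫ t := by
    simpa [φ, InnerProductSpace.toDual_apply_apply] using
      (hf _).hasFDerivAt.comp_hasDerivAt t AffineMap.hasDerivAt_lineMap
  calc ⟪f' a, b - a⟫
      ≤ slope φ 0 1 :=
        hφ.le_slope_of_hasDerivAt trivial trivial zero_lt_one (by simpa using hderiv 0)
    _ ≤ ⟪f' b, b - a⟫ :=
        hφ.slope_le_of_hasDerivAt trivial trivial zero_lt_one (by simpa using hderiv 1)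

lemma StrongConvexOn.mul_norm_sq_le_inner_gradient_sub (hc : StrongConvexOn Set.univ μ f)
    (hf : ∀ z, HasGradientAt f (f' z) z) (a b : F) :
    μ * ‖b - a‖ ^ 2 ≤ ⟪f' b - f' a, b - a⟫ := by
  have hmono := (strongConvexOn_iff_convex.mp hc).inner_gradient_le_inner_gradient
    (fun z => (hf z).sub_const_mul_norm_sq μ) a b
  have hsplit : ⟪f' b - μ • b, b - a⟫ - ⟪f' a - μ • a, b - a⟫ =
      ⟪f' b - f' a, b - a⟫ - μ * ‖b - a‖ ^ 2 := by
    rw [← real_inner_self_eq_norm_sq]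
    simp only [inner_sub_left, real_inner_smul_left]
    ring
  linarith

lemma StrongConvexOn.mul_norm_sub_le_norm_gradient_sub (hc : StrongConvexOn Set.univ μ f)
    (hf : ∀ z, HasGradientAt f (f' z) z) (a b : F) :
    μ * ‖b - a‖ ≤ ‖f' b - f' a‖ := by
  rcases (norm_nonneg (b - a)).eq_or_lt with hab | hab
  · rw [← hab, mul_zero]
    exact norm_nonneg _
  refine le_of_mul_le_mul_right ?_ hab
  calc μ * ‖b - a‖ * ‖b - a‖ = μ * ‖b - a‖ ^ 2 := by ring
    _ ≤ ⟪f' b - f' a, b - a⟫ := hc.mul_norm_sq_le_inner_gradient_sub hf a b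
    _ ≤ ‖f' b - f' a‖ * ‖b - a‖ := real_inner_le_norm _ _

end Gradient

lemma norm_sub_le_of_strongConvexOn_of_gradient_eq_zero {E F : Type*} [NormedAddCommGroup E]
    [NormedAddCommGroup F] [InnerProductSpace ℝ F] [CompleteSpace F]
    {g : E → F → ℝ} {gy : E → F → F} {μ L : ℝ} (hμ : 0 < μ)
    (hgrad : ∀ x y, HasGradientAt (g x) (gy x y) y) (hsc : ∀ x, StrongConvexOn Set.univ μ (g x))
    (hlip : ∀ x x' y, ‖gy x y - gy x' y‖ ≤ L * ‖x - x'‖)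
    {ystar : E → F} (hstar : ∀ x, gy x (ystar x) = 0) (x x' : E) :
    ‖ystar x - ystar x'‖ ≤ L / μ * ‖x - x'‖ := by
  rw [div_mul_eq_mul_div, le_div_iff₀ hμ, mul_comm]
  calc μ * ‖ystar x - ystar x'‖
      ≤ ‖gy x (ystar x) - gy x (ystar x')‖ :=
        (hsc x).mul_norm_sub_le_norm_gradient_sub (hgrad x) _ _
    _ = ‖gy x' (ystar x') - gy x (ystar x')‖ := by rw [hstar, hstar, norm_sub_rev]
    _ ≤ L * ‖x - x'‖ := by simpa only [norm_sub_rev x] using hlip x' x (ystar x')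

theorem stmt_4_general {m n : ℕ}
    (g : EuclideanSpace ℝ (Fin m) → EuclideanSpace ℝ (Fin n) → ℝ)
    (gy : EuclideanSpace ℝ (Fin m) → EuclideanSpace ℝ (Fin n) → EuclideanSpace ℝ (Fin n))
    (hgrad : ∀ x y, HasGradientAt (g x) (gy x y) y)
    (μ L : ℝ) (hμ : 0 < μ)
    (hsc : ∀ x, StrongConvexOn Set.univ μ (g x))
    (hlip : ∀ x x' y y',
      ‖gy x y - gy x' y'‖ ≤ L * Real.sqrt (‖x - x'‖ ^ 2 + ‖y - y'‖ ^ 2))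
    (ystar : EuclideanSpace ℝ (Fin m) → EuclideanSpace ℝ (Fin n))
    (hstar : ∀ x, gy x (ystar x) = 0) :
    ∀ x x', ‖ystar x - ystar x'‖ ≤ (L / μ) * ‖x - x'‖ := by
  refine norm_sub_le_of_strongConvexOn_of_gradient_eq_zero hμ hgrad hsc (fun x x' y => ?_) hstar
  simpa [Real.sqrt_sq (norm_nonneg _)] using hlip x x' y y

/-- Lipschitz continuity of the lower-level solution map `y*` for a function
`g(x,y)` that is `μ`-strongly convex in `y` and has a jointly `L`-Lipschitz
gradient (joint ℓ₂ norm on the product): `‖y*(x) - y*(x')‖ ≤ (L/μ)‖x - x'‖`. -/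
theorem stmt_4 {m n : ℕ}
    (g : EuclideanSpace ℝ (Fin m) → EuclideanSpace ℝ (Fin n) → ℝ)
    (gy : EuclideanSpace ℝ (Fin m) → EuclideanSpace ℝ (Fin n) → EuclideanSpace ℝ (Fin n))
    (hgrad : ∀ x y, HasGradientAt (g x) (gy x y) y)
    (μ L : ℝ) (hμ : 0 < μ) (hL : 0 < L)
    (hsc : ∀ x, StrongConvexOn Set.univ μ (g x))
    (hlip : ∀ x x' y y',
      ‖gy x y - gy x' y'‖ ≤ L * Real.sqrt (‖x - x'‖ ^ 2 + ‖y - y'‖ ^ 2))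
    (ystar : EuclideanSpace ℝ (Fin m) → EuclideanSpace ℝ (Fin n))
    (hstar : ∀ x, gy x (ystar x) = 0) :
    ∀ x x', ‖ystar x - ystar x'‖ ≤ (L / μ) * ‖x - x'‖ :=
  stmt_4_general g gy hgrad μ L hμ hsc hlip ystar hstar
end

section
/- Let A be a symmetric positive definite matrix with eigenvalues in [μ, L] and v* = A⁻¹ b. Suppose Ã is a random symmetric matrix with E[Ã] = A and ‖Ã - A‖ ≤ L_v almost surely. For the stochastic iteration v⁺ = v - η(Ãv - b) with 0 < η ≤ 1/(2L), E‖v⁺ - v*‖² ≤ (1 - μη)‖v - v*‖² + 8η²L_v²‖v‖². -/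
open MeasureTheory
open scoped RealInnerProductSpace

set_option maxHeartbeats 1000000

/-- One step of the stochastic Richardson iteration with an unbiased random
matrix `Ã`: `E‖v⁺ - v*‖² ≤ (1 - μη)‖v - v*‖² + 8η²L_v²‖v‖²`. -/
theorem stmt_17 {n : ℕ} {Ω : Type*} [MeasurableSpace Ω] (P : Measure Ω)
    [IsProbabilityMeasure P] (μ L Lv : ℝ) (hμ : 0 < μ) (hμL : μ ≤ L) (hLv : 0 ≤ Lv)
    (A : EuclideanSpace ℝ (Fin n) →L[ℝ] EuclideanSpace ℝ (Fin n))
    (hsymm : ∀ u v, ⟪A u, v⟫ = ⟪u, A v⟫)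
    (hlb : ∀ v, μ * ‖v‖ ^ 2 ≤ ⟪v, A v⟫)
    (hub : ∀ v, ⟪v, A v⟫ ≤ L * ‖v‖ ^ 2)
    (b vstar : EuclideanSpace ℝ (Fin n)) (hvstar : A vstar = b)
    (Atil : Ω → (EuclideanSpace ℝ (Fin n) →L[ℝ] EuclideanSpace ℝ (Fin n)))
    (hmeas : AEStronglyMeasurable Atil P)
    (hsymm' : ∀ᵐ ω ∂P, ∀ u v, ⟪Atil ω u, v⟫ = ⟪u, Atil ω v⟫)
    (hunbiased : (∫ ω, Atil ω ∂P) = A)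
    (hvar : ∀ᵐ ω ∂P, ‖Atil ω - A‖ ≤ Lv)
    (η : ℝ) (hη0 : 0 < η) (hηL : η ≤ 1 / (2 * L))
    (v : EuclideanSpace ℝ (Fin n)) :
    (∫ ω, ‖(v - η • (Atil ω v - b)) - vstar‖ ^ 2 ∂P) ≤
      (1 - μ * η) * ‖v - vstar‖ ^ 2 + 8 * η ^ 2 * Lv ^ 2 * ‖v‖ ^ 2 := by
  classical
  have hL0 : 0 < L := lt_of_lt_of_le hμ hμL
  set e : EuclideanSpace ℝ (Fin n) := v - vstar with he
  set c : EuclideanSpace ℝ (Fin n) := e - η • (A e) with hc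
  set w : Ω → EuclideanSpace ℝ (Fin n) := fun ω => Atil ω v - A v with hw
  -- pointwise rewrite of the iterate
  have hpt : ∀ ω, (v - η • (Atil ω v - b)) - vstar = c - η • (w ω) := by
    intro ω
    rw [hc, he]
    show v - η • (Atil ω v - b) - vstar
        = (v - vstar) - η • (A (v - vstar)) - η • (Atil ω v - A v)
    rw [← hvstar, map_sub, smul_sub, smul_sub, smul_sub]
    abel
  -- integrability of Atil
  have hAint : Integrable Atil P := by
    refine ⟨hmeas, HasFiniteIntegral.of_bounded (C := Lv + ‖A‖) ?_⟩
    filter_upwards [hvar] with ω h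
    calc ‖Atil ω‖ = ‖(Atil ω - A) + A‖ := by rw [sub_add_cancel]
    _ ≤ ‖Atil ω - A‖ + ‖A‖ := norm_add_le _ _
    _ ≤ Lv + ‖A‖ := by linarith
  have hwmeas : AEStronglyMeasurable w P := by
    have : AEStronglyMeasurable (fun ω => Atil ω v) P :=
      ((ContinuousLinearMap.apply ℝ (EuclideanSpace ℝ (Fin n))
        v).continuous.comp_aestronglyMeasurable hmeas)
    exact this.sub aestronglyMeasurable_const
  have hwbd : ∀ᵐ ω ∂P, ‖w ω‖ ≤ Lv * ‖v‖ := by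
    filter_upwards [hvar] with ω h
    calc ‖w ω‖ = ‖(Atil ω - A) v‖ := by simp [hw]
    _ ≤ ‖Atil ω - A‖ * ‖v‖ := (Atil ω - A).le_opNorm v
    _ ≤ Lv * ‖v‖ := by nlinarith [norm_nonneg (v : EuclideanSpace ℝ (Fin n))]
  have hwint : Integrable w P :=
    ⟨hwmeas, HasFiniteIntegral.of_bounded hwbd⟩
  -- mean of w is zero
  have hwzero : (∫ ω, w ω ∂P) = 0 := by
    have h1 : Integrable (fun ω => Atil ω v) P := by
      refine ⟨((ContinuousLinearMap.apply ℝ (EuclideanSpace ℝ (Fin n))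
        v).continuous.comp_aestronglyMeasurable hmeas),
        HasFiniteIntegral.of_bounded (C := (Lv + ‖A‖) * ‖v‖) ?_⟩
      filter_upwards [hvar] with ω h
      calc ‖Atil ω v‖ ≤ ‖Atil ω‖ * ‖v‖ := (Atil ω).le_opNorm v
      _ ≤ (Lv + ‖A‖) * ‖v‖ := by
          have : ‖Atil ω‖ ≤ Lv + ‖A‖ := by
            calc ‖Atil ω‖ = ‖(Atil ω - A) + A‖ := by rw [sub_add_cancel]
            _ ≤ ‖Atil ω - A‖ + ‖A‖ := norm_add_le _ _
            _ ≤ Lv + ‖A‖ := by linarith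
          nlinarith [norm_nonneg (v : EuclideanSpace ℝ (Fin n))]
    have h2 : (∫ ω, Atil ω v ∂P) = A v := by
      rw [← ContinuousLinearMap.integral_apply hAint v, hunbiased]
    have : (∫ ω, w ω ∂P) = (∫ ω, Atil ω v ∂P) - ∫ _ω, A v ∂P :=
      integral_sub h1 (integrable_const _)
    rw [this, h2, integral_const]
    simp
  -- expansion
  have hexp : ∀ ω, ‖c - η • (w ω)‖ ^ 2
      = ‖c‖ ^ 2 - 2 * (η * ⟪c, w ω⟫) + η ^ 2 * ‖w ω‖ ^ 2 := by
    intro ω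
    rw [norm_sub_sq_real, real_inner_smul_right, norm_smul, mul_pow,
      Real.norm_eq_abs, sq_abs]
  -- integrability of the pieces
  have hinner_int : Integrable (fun ω => η * ⟪c, w ω⟫) P := by
    refine Integrable.const_mul ?_ η
    refine ⟨?_, HasFiniteIntegral.of_bounded (C := ‖c‖ * (Lv * ‖v‖)) ?_⟩
    · exact (continuous_const.inner continuous_id).comp_aestronglyMeasurable hwmeas
    · filter_upwards [hwbd] with ω h
      calc ‖(⟪c, w ω⟫ : ℝ)‖ ≤ ‖c‖ * ‖w ω‖ := norm_inner_le_norm c (w ω)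
      _ ≤ ‖c‖ * (Lv * ‖v‖) := by nlinarith [norm_nonneg c, norm_nonneg (w ω)]
  have hsq_int : Integrable (fun ω => η ^ 2 * ‖w ω‖ ^ 2) P := by
    refine Integrable.const_mul ?_ _
    refine ⟨(hwmeas.norm.pow 2), HasFiniteIntegral.of_bounded (C := (Lv * ‖v‖) ^ 2) ?_⟩
    filter_upwards [hwbd] with ω h
    have h0 : (0:ℝ) ≤ ‖w ω‖ := norm_nonneg _
    have : ‖w ω‖ ^ 2 ≤ (Lv * ‖v‖) ^ 2 := by nlinarith
    simpa [abs_of_nonneg (sq_nonneg ‖w ω‖)] using this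
  -- compute the integral
  have hsub : Integrable (fun ω => ‖c‖ ^ 2 - 2 * (η * ⟪c, w ω⟫)) P :=
    (integrable_const _).sub (hinner_int.const_mul 2)
  have hsplit : (∫ ω, ‖(v - η • (Atil ω v - b)) - vstar‖ ^ 2 ∂P)
      = ‖c‖ ^ 2 - 2 * (η * ⟪c, ∫ ω, w ω ∂P⟫) + ∫ ω, η ^ 2 * ‖w ω‖ ^ 2 ∂P := by
    have heq : (fun ω => ‖(v - η • (Atil ω v - b)) - vstar‖ ^ 2)
        = fun ω => ‖c‖ ^ 2 - 2 * (η * ⟪c, w ω⟫) + η ^ 2 * ‖w ω‖ ^ 2 := by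
      funext ω; rw [hpt ω, hexp ω]
    rw [heq, integral_add hsub hsq_int,
      integral_sub (integrable_const _) ((hinner_int).const_mul 2),
      integral_const, integral_const_mul, integral_const_mul, integral_inner hwint]
    simp
  rw [hsplit, hwzero]
  -- bound the variance term
  have hvarbd : (∫ ω, η ^ 2 * ‖w ω‖ ^ 2 ∂P) ≤ η ^ 2 * (Lv * ‖v‖) ^ 2 := by
    have hmono : ∀ᵐ ω ∂P, η ^ 2 * ‖w ω‖ ^ 2 ≤ η ^ 2 * (Lv * ‖v‖) ^ 2 := by
      filter_upwards [hwbd] with ω h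
      exact mul_le_mul_of_nonneg_left
        (pow_le_pow_left₀ (norm_nonneg _) h 2) (sq_nonneg η)
    calc (∫ ω, η ^ 2 * ‖w ω‖ ^ 2 ∂P)
        ≤ ∫ _ω, η ^ 2 * (Lv * ‖v‖) ^ 2 ∂P :=
          integral_mono_ae hsq_int (integrable_const _) hmono
      _ = η ^ 2 * (Lv * ‖v‖) ^ 2 := by simp
  clear_value e c w
  -- key operator inequality ‖Ae‖² ≤ L⟪e, Ae⟫
  have hkey : ‖A e‖ ^ 2 ≤ L * ⟪e, A e⟫ := by
    have hq : 0 ≤ ⟪L • e - A e, A (L • e - A e)⟫ :=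
      le_trans (mul_nonneg hμ.le (sq_nonneg _)) (hlb (L • e - A e))
    have hexp2 : ⟪L • e - A e, A (L • e - A e)⟫
        = L ^ 2 * ⟪e, A e⟫ - 2 * L * ‖A e‖ ^ 2 + ⟪A e, A (A e)⟫ := by
      have h1 : ⟪e, A (A e)⟫ = ‖A e‖ ^ 2 := by
        rw [← hsymm e (A e)]; exact real_inner_self_eq_norm_sq _
      have h2 : (⟪A e, A e⟫ : ℝ) = ‖A e‖ ^ 2 := real_inner_self_eq_norm_sq _
      simp only [map_sub, _root_.map_smul, inner_sub_left, inner_sub_right,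
        real_inner_smul_left, real_inner_smul_right, h1, h2]
      ring
    have hub2 := hub (A e)
    rw [hexp2] at hq
    nlinarith [hL0, sq_nonneg ‖A e‖]
  have hc_bd : ‖c‖ ^ 2 ≤ (1 - μ * η) * ‖e‖ ^ 2 := by
    have hexp3 : ‖c‖ ^ 2 = ‖e‖ ^ 2 - 2 * (η * ⟪e, A e⟫) + η ^ 2 * ‖A e‖ ^ 2 := by
      rw [hc, norm_sub_sq_real, real_inner_smul_right, norm_smul, mul_pow,
        Real.norm_eq_abs, sq_abs]
    have hlbe := hlb e
    have hηL' : η * L ≤ 1/2 := by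
      rw [le_div_iff₀ (by positivity : (0:ℝ) < 2 * L)] at hηL
      nlinarith
    have ht0 : 0 ≤ ⟪e, A e⟫ := le_trans (mul_nonneg hμ.le (sq_nonneg _)) hlbe
    rw [hexp3]
    nlinarith [mul_le_mul_of_nonneg_left hkey (sq_nonneg η), sq_nonneg ‖e‖,
      mul_le_mul_of_nonneg_right hηL' (mul_nonneg hη0.le ht0)]
  have hfinal : η ^ 2 * (Lv * ‖v‖) ^ 2 ≤ 8 * η ^ 2 * Lv ^ 2 * ‖v‖ ^ 2 := by
    nlinarith [sq_nonneg (η * Lv * ‖v‖)]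
  simp only [inner_zero_right, mul_zero, sub_zero]
  linarith [hc_bd, hvarbd, hfinal]
end
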